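/- Set λ = −5√2/√3 and let γ be a real number with γ ≠ 2. Define the shifted map components X̄(X,Y) = W₁(−1 + X, Y) + 1 and Ȳ(X,Y) = W₂(−1 + X, Y), which fix the origin (corresponding to the fixed point C = (−1,0)), and define ψ(Y) = ((3γ − 10)/(2(3γ − 6)))·Y². Then: (i) the center-manifold invariance residual R(Y) = ψ(Ȳ(ψ(Y), Y)) − X̄(ψ(Y), Y) satisfies R(Y) = O(Y⁴) as Y → 0; (ii) the reduced map G(Y) = Ȳ(ψ(Y), Y) satisfies G(Y) = −Y + (5/6)·((2 − 3γ)/(γ − 2))·Y³ + O(Y⁵) as Y → 0; (iii) G(0) = 0, G'(0) = −1, G''(0) = 0, and the Schwarzian derivative SG(0) = −G'''(0) − (3/2)·G''(0)² equals 5(3γ − 2)/(γ − 2), which is negative for 2/3 < γ < 2 and positive for 0 ≤ γ < 2/3. -/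

import Mathlib

open Asymptotics Filter

noncomputable def f (γ lam x y : ℝ) : ℝ :=
  (3/2) * x * (2*x^2 + γ*(1 - x^2 - y^2)) - 3*x + Real.sqrt (3/2) * lam * y^2

noncomputable def g (γ lam x y : ℝ) : ℝ :=
  (3/2) * y * (2*x^2 + γ*(1 - x^2 - y^2)) - Real.sqrt (3/2) * lam * x * y

/-- The unit-step Euler discretization map W(x,y) = (x + f(x,y), y + g(x,y)). -/
noncomputable def W (γ lam : ℝ) (p : ℝ × ℝ) : ℝ × ℝ :=
  (p.1 + f γ lam p.1 p.2, p.2 + g γ lam p.1 p.2)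

/-- The map W with λ = −5√2/√3, shifted so that the fixed point C = (−1,0) is at
the origin: first component. -/
noncomputable def Xbar (γ X Y : ℝ) : ℝ :=
  (W γ (-(5 * Real.sqrt 2 / Real.sqrt 3)) (-1 + X, Y)).1 + 1

/-- The shifted map: second component. -/
noncomputable def Ybar (γ X Y : ℝ) : ℝ :=
  (W γ (-(5 * Real.sqrt 2 / Real.sqrt 3)) (-1 + X, Y)).2

/-- The approximate center manifold X = ψ(Y) at C for λ = −5√2/√3. -/
noncomputable def ψ (γ Y : ℝ) : ℝ := ((3*γ - 10) / (2*(3*γ - 6))) * Y^2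

/-- The reduced map G(Y) = Ȳ(ψ(Y), Y) on the approximate center manifold. -/
noncomputable def G (γ Y : ℝ) : ℝ := Ybar γ (ψ γ Y) Y

section Aux

private lemma sqrt_key : Real.sqrt (3/2) * (-(5 * Real.sqrt 2 / Real.sqrt 3)) = -5 := by
  have h2 : (0:ℝ) < Real.sqrt 2 := Real.sqrt_pos.mpr (by norm_num)
  have h3 : (0:ℝ) < Real.sqrt 3 := Real.sqrt_pos.mpr (by norm_num)
  rw [Real.sqrt_div (by norm_num : (0:ℝ) ≤ 3)]
  field_simp

private lemma Xbar_eq (γ X Y : ℝ) :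
    Xbar γ X Y = 7*X - 9*X^2 + 3*X^3 - 5*Y^2
      + γ*(-3*X + (9/2)*X^2 - (3/2)*X^3 + (3/2)*Y^2 - (3/2)*X*Y^2) := by
  simp only [Xbar, W, f]
  rw [sqrt_key]
  ring

private lemma Ybar_eq (γ X Y : ℝ) :
    Ybar γ X Y = -Y - X*Y + 3*X^2*Y + γ*(3*X*Y - (3/2)*X^2*Y - (3/2)*Y^3) := by
  simp only [Ybar, W, g]
  rw [sqrt_key]
  ring

private lemma hdA (a b Y : ℝ) :
    HasDerivAt (fun y : ℝ => -y + a*y^3 + b*y^5) (-1 + 3*a*Y^2 + 5*b*Y^4) Y := by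
  have h := (((hasDerivAt_id' (x := Y)).neg).add
    ((hasDerivAt_pow 3 Y).const_mul a)).add ((hasDerivAt_pow 5 Y).const_mul b)
  refine h.congr_deriv ?_
  push_cast; ring

private lemma hdB (a b Y : ℝ) :
    HasDerivAt (fun y : ℝ => -1 + 3*a*y^2 + 5*b*y^4) (6*a*Y + 20*b*Y^3) Y := by
  have h := ((hasDerivAt_const Y (-1:ℝ)).add
    ((hasDerivAt_pow 2 Y).const_mul (3*a))).add ((hasDerivAt_pow 4 Y).const_mul (5*b))
  refine h.congr_deriv ?_
  push_cast; ring

private lemma hdC (a b Y : ℝ) :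
    HasDerivAt (fun y : ℝ => 6*a*y + 20*b*y^3) (6*a + 60*b*Y^2) Y := by
  have h := (((hasDerivAt_id' (x := Y)).const_mul (6*a))).add
    ((hasDerivAt_pow 3 Y).const_mul (20*b))
  refine h.congr_deriv ?_
  push_cast; ring

end Aux

/-- For λ = −5√2/√3 and γ ≠ 2: (i) the invariance residual is O(Y⁴); (ii) the
reduced map is −Y + (5/6)((2 − 3γ)/(γ − 2))Y³ + O(Y⁵); (iii) G(0) = 0,
G'(0) = −1, G''(0) = 0, and the Schwarzian derivative SG(0) = 5(3γ − 2)/(γ − 2),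
negative for 2/3 < γ < 2 and positive for 0 ≤ γ < 2/3. -/
theorem stmt_17 (γ : ℝ) (hγ : γ ≠ 2) :
    (fun Y : ℝ => ψ γ (Ybar γ (ψ γ Y) Y) - Xbar γ (ψ γ Y) Y) =O[nhds (0:ℝ)]
      (fun Y : ℝ => Y^4) ∧
    (fun Y : ℝ => G γ Y - (-Y + (5/6) * ((2 - 3*γ)/(γ - 2)) * Y^3)) =O[nhds (0:ℝ)]
      (fun Y : ℝ => Y^5) ∧
    G γ 0 = 0 ∧
    deriv (G γ) 0 = -1 ∧
    iteratedDeriv 2 (G γ) 0 = 0 ∧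
    -(iteratedDeriv 3 (G γ) 0) - (3/2) * (iteratedDeriv 2 (G γ) 0)^2 =
      5*(3*γ - 2)/(γ - 2) ∧
    (2/3 < γ ∧ γ < 2 → 5*(3*γ - 2)/(γ - 2) < 0) ∧
    (0 ≤ γ ∧ γ < 2/3 → 5*(3*γ - 2)/(γ - 2) > 0) := by
  have hγ2 : γ - 2 ≠ 0 := sub_ne_zero.mpr hγ
  have hγ6 : 3*γ - 6 ≠ 0 := by intro h; apply hγ2; linarith
  set c : ℝ := (3*γ - 10) / (2*(3*γ - 6)) with hc
  set b3 : ℝ := (5/6) * ((2 - 3*γ)/(γ - 2)) with hb3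
  set b5 : ℝ := -(3*γ - 10)^2 / (24*(γ - 2)) with hb5
  -- G as an explicit polynomial
  have hG : ∀ Y : ℝ, G γ Y = -Y + b3*Y^3 + b5*Y^5 := by
    intro Y
    simp only [G, Ybar_eq, ψ, hb3, hb5]
    field_simp
    ring
  have hGfun : G γ = fun Y : ℝ => -Y + b3*Y^3 + b5*Y^5 := funext hG
  -- key identity for c
  have hck : c * (3*γ - 6) = (3*γ - 10)/2 := by
    rw [hc]; field_simp
  refine ⟨?_, ?_, ?_, ?_, ?_, ?_, ?_, ?_⟩
  · -- residual is O(Y^4)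
    set q : ℝ → ℝ := fun Y =>
      c*(-2*(b3 + b5*Y^2) + (b3 + b5*Y^2)^2*Y^2)
      + 9*c^2 - 3*c^3*Y^2 - γ*((9/2)*c^2 - (3/2)*c^3*Y^2 - (3/2)*c) with hq
    have hR : (fun Y : ℝ => ψ γ (Ybar γ (ψ γ Y) Y) - Xbar γ (ψ γ Y) Y)
        = fun Y : ℝ => q Y * Y^4 := by
      funext Y
      have h1 : Ybar γ (ψ γ Y) Y = -Y + b3*Y^3 + b5*Y^5 := hG Y
      rw [h1, Xbar_eq]
      simp only [ψ, hq, ← hc]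
      linear_combination (Y^2) * hck
    rw [hR]
    have hq1 : q =O[nhds (0:ℝ)] (fun _ : ℝ => (1:ℝ)) := by
      have : Continuous q := by fun_prop
      exact (this.tendsto 0).isBigO_one ℝ
    simpa using hq1.mul (isBigO_refl (fun Y : ℝ => Y^4) (nhds 0))
  · -- G - cubic part is O(Y^5)
    have h1 : (fun Y : ℝ => G γ Y - (-Y + (5/6) * ((2 - 3*γ)/(γ - 2)) * Y^3))
        = fun Y : ℝ => b5 * Y^5 := by
      funext Y; rw [hG Y, hb3]; ring
    rw [h1]
    exact (isBigO_refl (fun Y : ℝ => Y^5) (nhds 0)).const_mul_left b5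
  · rw [hG 0]; ring
  · have e1 : deriv (G γ) = fun Y : ℝ => -1 + 3*b3*Y^2 + 5*b5*Y^4 := by
      rw [hGfun]; funext Y; exact (hdA b3 b5 Y).deriv
    rw [e1]; norm_num
  · have e1 : deriv (G γ) = fun Y : ℝ => -1 + 3*b3*Y^2 + 5*b5*Y^4 := by
      rw [hGfun]; funext Y; exact (hdA b3 b5 Y).deriv
    have e2 : deriv (deriv (G γ)) = fun Y : ℝ => 6*b3*Y + 20*b5*Y^3 := by
      rw [e1]; funext Y; exact (hdB b3 b5 Y).deriv
    rw [iteratedDeriv_succ, iteratedDeriv_one, e2]; norm_num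
  · have e1 : deriv (G γ) = fun Y : ℝ => -1 + 3*b3*Y^2 + 5*b5*Y^4 := by
      rw [hGfun]; funext Y; exact (hdA b3 b5 Y).deriv
    have e2 : deriv (deriv (G γ)) = fun Y : ℝ => 6*b3*Y + 20*b5*Y^3 := by
      rw [e1]; funext Y; exact (hdB b3 b5 Y).deriv
    have e3 : deriv (deriv (deriv (G γ))) = fun Y : ℝ => 6*b3 + 60*b5*Y^2 := by
      rw [e2]; funext Y; exact (hdC b3 b5 Y).deriv
    have h3 : iteratedDeriv 3 (G γ) 0 = 6*b3 := by
      rw [iteratedDeriv_succ, iteratedDeriv_succ, iteratedDeriv_one, e3]; norm_num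
    have h2 : iteratedDeriv 2 (G γ) 0 = 0 := by
      rw [iteratedDeriv_succ, iteratedDeriv_one, e2]; norm_num
    rw [h3, h2, hb3]
    field_simp
    ring
  · rintro ⟨h1, h2⟩
    exact div_neg_of_pos_of_neg (by linarith) (by linarith)
  · rintro ⟨h1, h2⟩
    exact div_pos_of_neg_of_neg (by linarith) (by linarith)
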